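/- (Intermediate descent inequality, Eq. (proof-1-4)) Let τ ≥ 1 be an integer and η > 0. Define the random point x̄⁺ = x̄ − (ητ/N)·Σ_{i=1}^N G_i. Then E[f(x̄⁺)] ≤ f(x̄) + ητ·(Lητ − 1/2)·‖∇f(x̄)‖² + (ηL²τ/N)·(1/2 + ηLτ)·Σ_{i=1}^N ‖x̄ − x_i‖² + σ²η²τ²L/N. -/

import Mathlib

/-!
By the descent lemma for `L`-smooth functions, the step `x̄⁺ - x̄ = -ητ (ḡ + Z)`, with
`ḡ = (1/N) ∑ ∇fᵢ(xᵢ)` and `Z` the averaged centred noise, gives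
`E f(x̄⁺) ≤ f(x̄) - ητ ⟪∇f(x̄), ḡ⟫ + L(ητ)²/2 (‖ḡ‖² + σ²/N)`: the noise has mean zero and, by
independence, its second moment is the sum of the individual variances. Writing
`ḡ = ∇f(x̄) + e`, smoothness and Jensen give `‖e‖² ≤ (L²/N) ∑ ‖x̄ - xᵢ‖²`, and the cross term
`⟪∇f(x̄), e⟫` is absorbed by Young's inequality.
-/

open Finset MeasureTheory ProbabilityTheory
open scoped RealInnerProductSpace

section InnerProductSpace

variable {E : Type*} [NormedAddCommGroup E] [InnerProductSpace ℝ E]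

theorem abs_sub_sub_inner_le_of_lipschitz_gradient [CompleteSpace E] {φ : E → ℝ} {L : ℝ}
    (hφ : Differentiable ℝ φ) (hLip : ∀ x y, ‖gradient φ y - gradient φ x‖ ≤ L * ‖y - x‖)
    (a b : E) : |φ b - φ a - ⟪gradient φ a, b - a⟫| ≤ L / 2 * ‖b - a‖ ^ 2 := by
  set v := b - a
  let ψ : ℝ → ℝ := fun s => φ (a + s • v) - φ a - s * ⟪gradient φ a, v⟫
  have hψ : ∀ s, HasDerivAt ψ ⟪gradient φ (a + s • v) - gradient φ a, v⟫ s := by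
    intro s
    have hline : HasDerivAt (fun s : ℝ => a + s • v) v s := by
      simpa using ((hasDerivAt_id s).smul_const v).const_add a
    have hcomp := (hφ _).hasGradientAt.hasFDerivAt.comp_hasDerivAt s hline
    simpa [ψ, inner_sub_left, Function.comp_def] using
      (hcomp.sub_const (φ a)).fun_sub ((hasDerivAt_id s).mul_const ⟪gradient φ a, v⟫)
  have hB : ∀ s, HasDerivAt (fun s => L / 2 * ‖v‖ ^ 2 * s ^ 2) (L * ‖v‖ ^ 2 * s) s := by
    intro s
    exact ((hasDerivAt_pow 2 s).const_mul (L / 2 * ‖v‖ ^ 2)).congr_deriv (by push_cast; ring)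
  have hbound : ∀ s ∈ Set.Ico (0 : ℝ) 1,
      ‖⟪gradient φ (a + s • v) - gradient φ a, v⟫‖ ≤ L * ‖v‖ ^ 2 * s := by
    rintro s ⟨hs, -⟩
    calc ‖⟪gradient φ (a + s • v) - gradient φ a, v⟫‖
        ≤ ‖gradient φ (a + s • v) - gradient φ a‖ * ‖v‖ := norm_inner_le_norm _ _
      _ ≤ L * ‖s • v‖ * ‖v‖ := by
          simpa using mul_le_mul_of_nonneg_right (hLip a (a + s • v)) (norm_nonneg v)
      _ = L * ‖v‖ ^ 2 * s := by rw [norm_smul, Real.norm_of_nonneg hs]; ring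
  have key := image_norm_le_of_norm_deriv_right_le_deriv_boundary
    (fun s _ => (hψ s).continuousAt.continuousWithinAt) (fun s _ => (hψ s).hasDerivWithinAt)
    (by simp [ψ]) hB hbound (Set.right_mem_Icc.2 zero_le_one)
  simpa [ψ, v] using key

theorem gradient_const_mul_sum [CompleteSpace E] {ι : Type*} [Fintype ι] {f : ι → E → ℝ}
    (hf : ∀ i, Differentiable ℝ (f i)) (c : ℝ) (z : E) :
    gradient (fun z => c * ∑ i, f i z) z = c • ∑ i, gradient (f i) z := by
  have h : HasFDerivAt (fun z => c * ∑ i, f i z) (c • ∑ i, fderiv ℝ (f i) z) z :=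
    (HasFDerivAt.fun_sum fun i _ => (hf i z).hasFDerivAt).const_mul c
  rw [h.hasGradientAt.gradient, map_smul, map_sum]
  rfl

theorem norm_average_sub_average_le {ι X F : Type*} [Fintype ι] [Nonempty ι]
    [SeminormedAddCommGroup X] [SeminormedAddCommGroup F] [NormedSpace ℝ F]
    {u : ι → X → F} {L : ℝ} (hu : ∀ i x y, ‖u i y - u i x‖ ≤ L * ‖y - x‖) (x y : X) :
    ‖(1 / (Fintype.card ι : ℝ)) • ∑ i, u i y - (1 / (Fintype.card ι : ℝ)) • ∑ i, u i x‖
      ≤ L * ‖y - x‖ := by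
  have hcard : (0 : ℝ) < Fintype.card ι := by exact_mod_cast Fintype.card_pos
  rw [← smul_sub, ← sum_sub_distrib, norm_smul, Real.norm_of_nonneg (by positivity)]
  calc 1 / (Fintype.card ι : ℝ) * ‖∑ i, (u i y - u i x)‖
      ≤ 1 / (Fintype.card ι : ℝ) * ∑ _i : ι, L * ‖y - x‖ := by
        gcongr
        exact (norm_sum_le _ _).trans (sum_le_sum fun i _ => hu i x y)
    _ = L * ‖y - x‖ := by
        rw [sum_const, card_univ, nsmul_eq_mul]
        field_simp

theorem norm_average_sq_le {ι F : Type*} [Fintype ι] [SeminormedAddCommGroup F] [NormedSpace ℝ F]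
    (w : ι → F) :
    ‖(1 / (Fintype.card ι : ℝ)) • ∑ i, w i‖ ^ 2
      ≤ 1 / (Fintype.card ι : ℝ) * ∑ i, ‖w i‖ ^ 2 := by
  rcases isEmpty_or_nonempty ι with hι | hι
  · simp
  have hcard : (0 : ℝ) < Fintype.card ι := by exact_mod_cast Fintype.card_pos
  rw [norm_smul, Real.norm_of_nonneg (by positivity), mul_pow]
  calc (1 / (Fintype.card ι : ℝ)) ^ 2 * ‖∑ i, w i‖ ^ 2
      ≤ (1 / (Fintype.card ι : ℝ)) ^ 2 * (Fintype.card ι * ∑ i, ‖w i‖ ^ 2) := by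
        gcongr
        calc ‖∑ i, w i‖ ^ 2 ≤ (∑ i, ‖w i‖) ^ 2 := by gcongr; exact norm_sum_le _ _
          _ ≤ _ := by simpa using sq_sum_le_card_mul_sum_sq (s := univ) (f := fun i => ‖w i‖)
    _ = 1 / (Fintype.card ι : ℝ) * ∑ i, ‖w i‖ ^ 2 := by field_simp

theorem norm_average_sub_average_sq_le {ι X F : Type*} [Fintype ι]
    [SeminormedAddCommGroup X] [SeminormedAddCommGroup F] [NormedSpace ℝ F]
    {u : ι → X → F} {L : ℝ} (hu : ∀ i x y, ‖u i y - u i x‖ ≤ L * ‖y - x‖) (x : ι → X) (y : X) :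
    ‖(1 / (Fintype.card ι : ℝ)) • ∑ i, u i (x i) - (1 / (Fintype.card ι : ℝ)) • ∑ i, u i y‖ ^ 2
      ≤ L ^ 2 / Fintype.card ι * ∑ i, ‖y - x i‖ ^ 2 := by
  rw [← smul_sub, ← sum_sub_distrib]
  refine (norm_average_sq_le _).trans ?_
  rw [div_eq_mul_one_div (L ^ 2), mul_comm (L ^ 2), mul_assoc, mul_sum univ _ (L ^ 2)]
  gcongr with i
  calc ‖u i (x i) - u i y‖ ^ 2 ≤ (L * ‖x i - y‖) ^ 2 := by gcongr; exact hu i y (x i)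
    _ = L ^ 2 * ‖y - x i‖ ^ 2 := by rw [mul_pow, norm_sub_rev]

theorem neg_mul_inner_add_le (h e : E) {t L : ℝ} (ht : 0 ≤ t) (hL : 0 ≤ L) :
    -(t * ⟪h, h + e⟫) + L * t ^ 2 / 2 * ‖h + e‖ ^ 2
      ≤ t * (L * t - 1 / 2) * ‖h‖ ^ 2 + t * (1 / 2 + L * t) * ‖e‖ ^ 2 := by
  rw [← sub_nonneg]
  have gap : t * (L * t - 1 / 2) * ‖h‖ ^ 2 + t * (1 / 2 + L * t) * ‖e‖ ^ 2
      - (-(t * ⟪h, h + e⟫) + L * t ^ 2 / 2 * ‖h + e‖ ^ 2)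
      = t / 2 * ‖h + e‖ ^ 2 + L * t ^ 2 / 2 * ‖h - e‖ ^ 2 := by
    rw [norm_add_sq_real, norm_sub_sq_real, inner_add_right, real_inner_self_eq_norm_sq]
    ring
  rw [gap]
  positivity

theorem norm_sum_sq_eq_sum_sum_inner {ι : Type*} (s : Finset ι) (v : ι → E) :
    ‖∑ i ∈ s, v i‖ ^ 2 = ∑ i ∈ s, ∑ j ∈ s, ⟪v i, v j⟫ := by
  rw [← real_inner_self_eq_norm_sq, sum_inner]
  simp_rw [inner_sum]

section Independent

variable [MeasurableSpace E] [BorelSpace E] {Ω ι : Type*} [MeasurableSpace Ω] {μ : Measure Ω}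
  {Y : ι → Ω → E} (hindep : iIndepFun Y μ)
  (hY : ∀ i, Integrable (Y i) μ) (hY2 : ∀ i, Integrable (fun ω => ‖Y i ω‖ ^ 2) μ)
include hindep hY hY2

theorem integrable_inner_of_iIndepFun (i j : ι) :
    Integrable (fun ω => ⟪Y i ω, Y j ω⟫) μ := by
  rcases eq_or_ne i j with rfl | hij
  · simpa only [real_inner_self_eq_norm_sq] using hY2 i
  · exact (hindep.indepFun hij).integrable_bilin (hY i) (hY j) (innerSL ℝ)

theorem integrable_norm_sum_sq_of_iIndepFun [Fintype ι] :
    Integrable (fun ω => ‖∑ i, Y i ω‖ ^ 2) μ := by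
  simp_rw [norm_sum_sq_eq_sum_sum_inner]
  exact integrable_finsetSum _ fun i _ => integrable_finsetSum _ fun j _ =>
    integrable_inner_of_iIndepFun hindep hY hY2 i j

theorem integral_norm_sum_sq_of_iIndepFun [CompleteSpace E] [Fintype ι]
    (hY0 : ∀ i, ∫ ω, Y i ω ∂μ = 0) :
    ∫ ω, ‖∑ i, Y i ω‖ ^ 2 ∂μ = ∑ i, ∫ ω, ‖Y i ω‖ ^ 2 ∂μ := by
  have hcross : ∀ i j, i ≠ j → ∫ ω, ⟪Y i ω, Y j ω⟫ ∂μ = 0 := fun i j hij => by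
    have h := (hindep.indepFun hij).integral_bilin (hY i) (hY j) (innerSL ℝ)
    rwa [hY0 j, map_zero] at h
  simp_rw [norm_sum_sq_eq_sum_sum_inner]
  rw [integral_finsetSum _ fun i _ => integrable_finsetSum _ fun j _ =>
    integrable_inner_of_iIndepFun hindep hY hY2 i j]
  refine sum_congr rfl fun i _ => ?_
  rw [integral_finsetSum _ fun j _ => integrable_inner_of_iIndepFun hindep hY hY2 i j,
    sum_eq_single i (fun j _ hji => hcross i j hji.symm) (by simp)]
  simp_rw [real_inner_self_eq_norm_sq]

end Independent

section SecondMoment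

variable {Ω : Type*} [MeasurableSpace Ω] {μ : Measure Ω} [IsProbabilityMeasure μ]
  {Z : Ω → E} (hZ : Integrable Z μ) (hZ0 : ∫ ω, Z ω ∂μ = 0)
  (hZ2 : Integrable (fun ω => ‖Z ω‖ ^ 2) μ)
include hZ hZ2

theorem integrable_norm_add_sq (v : E) : Integrable (fun ω => ‖v + Z ω‖ ^ 2) μ := by
  simp_rw [norm_add_sq_real]
  exact ((integrable_const _).add ((hZ.const_inner v).const_mul 2)).add hZ2

include hZ0

theorem integral_norm_add_sq [CompleteSpace E] (v : E) :
    ∫ ω, ‖v + Z ω‖ ^ 2 ∂μ = ‖v‖ ^ 2 + ∫ ω, ‖Z ω‖ ^ 2 ∂μ := by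
  have hlin : Integrable (fun ω => ‖v‖ ^ 2 + 2 * ⟪v, Z ω⟫) μ :=
    (integrable_const _).add ((hZ.const_inner v).const_mul 2)
  simp_rw [norm_add_sq_real]
  rw [integral_add hlin hZ2, integral_add (integrable_const _) ((hZ.const_inner v).const_mul 2),
    integral_const_mul, integral_inner hZ, hZ0]
  simp

theorem integral_comp_add_add_le_of_lipschitz_gradient [CompleteSpace E] {φ : E → ℝ} {L : ℝ}
    (hφ : Differentiable ℝ φ) (hLip : ∀ x y, ‖gradient φ y - gradient φ x‖ ≤ L * ‖y - x‖)
    (a v : E) :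
    ∫ ω, φ (a + v + Z ω) ∂μ
      ≤ φ a + ⟪gradient φ a, v⟫ + L / 2 * (‖v‖ ^ 2 + ∫ ω, ‖Z ω‖ ^ 2 ∂μ) := by
  have hvZ : Integrable (fun ω => v + Z ω) μ := (integrable_const v).add hZ
  set lin : Ω → ℝ := fun ω => φ a + ⟪gradient φ a, v + Z ω⟫
  have hlin : Integrable lin μ := (integrable_const _).add (hvZ.const_inner _)
  have hquad := (integrable_norm_add_sq hZ hZ2 v).const_mul (L / 2)
  have hpt : ∀ ω, |φ (a + v + Z ω) - lin ω| ≤ L / 2 * ‖v + Z ω‖ ^ 2 := fun ω => by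
    simpa [lin, sub_sub, add_assoc] using
      abs_sub_sub_inner_le_of_lipschitz_gradient hφ hLip a (a + v + Z ω)
  have hint : Integrable (fun ω => φ (a + v + Z ω)) μ := by
    have hmeas : AEStronglyMeasurable (fun ω => φ (a + v + Z ω)) μ :=
      hφ.continuous.comp_aestronglyMeasurable (hZ.aestronglyMeasurable.const_add (a + v))
    have hrem : Integrable (fun ω => φ (a + v + Z ω) - lin ω) μ :=
      hquad.mono' (hmeas.sub hlin.aestronglyMeasurable) (ae_of_all _ hpt)
    exact (hrem.add hlin).congr (ae_of_all _ fun ω => by simp)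
  calc ∫ ω, φ (a + v + Z ω) ∂μ ≤ ∫ ω, (lin ω + L / 2 * ‖v + Z ω‖ ^ 2) ∂μ :=
        integral_mono hint (hlin.add hquad) fun ω => by linarith [(abs_le.1 (hpt ω)).2]
    _ = φ a + ⟪gradient φ a, v⟫ + L / 2 * (‖v‖ ^ 2 + ∫ ω, ‖Z ω‖ ^ 2 ∂μ) := by
        rw [integral_add hlin hquad, integral_const_mul, integral_norm_add_sq hZ hZ0 hZ2,
          integral_add (integrable_const _) (hvZ.const_inner _), integral_inner hvZ,
          integral_add (integrable_const v) hZ, hZ0]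
        simp

end SecondMoment

theorem integral_comp_sub_smul_sum_le_of_iIndepFun
    [CompleteSpace E] [MeasurableSpace E] [BorelSpace E]
    {Ω ι : Type*} [MeasurableSpace Ω] {μ : Measure Ω} [IsProbabilityMeasure μ] [Fintype ι]
    {φ : E → ℝ} {L σ t : ℝ} (hL : 0 ≤ L) (hφ : Differentiable ℝ φ)
    (hLip : ∀ x y, ‖gradient φ y - gradient φ x‖ ≤ L * ‖y - x‖)
    {G : ι → Ω → E} {m : ι → E} (hG : ∀ i, Integrable (G i) μ) (hindep : iIndepFun G μ)
    (hm : ∀ i, ∫ ω, G i ω ∂μ = m i) (hvarint : ∀ i, Integrable (fun ω => ‖G i ω - m i‖ ^ 2) μ)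
    (hvar : ∀ i, ∫ ω, ‖G i ω - m i‖ ^ 2 ∂μ ≤ σ ^ 2) (a : E) :
    ∫ ω, φ (a - (t / Fintype.card ι) • ∑ i, G i ω) ∂μ
      ≤ φ a - t * ⟪gradient φ a, (1 / (Fintype.card ι : ℝ)) • ∑ i, m i⟫
        + L * t ^ 2 / 2 * (‖(1 / (Fintype.card ι : ℝ)) • ∑ i, m i‖ ^ 2
          + σ ^ 2 / Fintype.card ι) := by
  set n : ℝ := (Fintype.card ι : ℝ)
  set Y : ι → Ω → E := fun i ω => G i ω - m i
  have hY : ∀ i, Integrable (Y i) μ := fun i => (hG i).sub (integrable_const _)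
  have hY0 : ∀ i, ∫ ω, Y i ω ∂μ = 0 := fun i => by
    simp [Y, integral_sub (hG i) (integrable_const _), hm]
  have hYindep : iIndepFun Y μ := hindep.comp _ fun i => measurable_id.sub_const _
  set Z : Ω → E := fun ω => -(t / n) • ∑ i, Y i ω
  have hZ : Integrable Z μ := (integrable_finsetSum univ fun i _ => hY i).smul _
  have hZ0 : ∫ ω, Z ω ∂μ = 0 := by
    simp only [Z]
    rw [integral_smul, integral_finsetSum _ fun i _ => hY i]
    simp [hY0]
  have hZ2 : Integrable (fun ω => ‖Z ω‖ ^ 2) μ := by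
    simp_rw [Z, norm_smul, mul_pow]
    exact (integrable_norm_sum_sq_of_iIndepFun hYindep hY hvarint).const_mul _
  have hZ2_le : ∫ ω, ‖Z ω‖ ^ 2 ∂μ ≤ t ^ 2 * σ ^ 2 / n := by
    simp_rw [Z, norm_smul, mul_pow, integral_const_mul,
      integral_norm_sum_sq_of_iIndepFun hYindep hY hvarint hY0]
    calc ‖-(t / n)‖ ^ 2 * ∑ i, ∫ ω, ‖Y i ω‖ ^ 2 ∂μ ≤ (t / n) ^ 2 * ∑ _i : ι, σ ^ 2 := by
          rw [norm_neg, Real.norm_eq_abs, sq_abs]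
          gcongr with i
          exact hvar i
      _ = t ^ 2 * σ ^ 2 / n := by
          rw [sum_const, card_univ, nsmul_eq_mul]
          change (t / n) ^ 2 * (n * σ ^ 2) = _
          rcases eq_or_ne n 0 with hn | hn
          · simp [hn]
          · field_simp
  have hsplit : ∀ ω, a - (t / n) • ∑ i, G i ω = a + -(t • (1 / n) • ∑ i, m i) + Z ω :=
    fun ω => by
      simp only [Z, Y, sum_sub_distrib]
      module
  simp_rw [hsplit]
  refine (integral_comp_add_add_le_of_lipschitz_gradient hZ hZ0 hZ2 hφ hLip a _).trans ?_
  rw [inner_neg_right, real_inner_smul_right, norm_neg, norm_smul, Real.norm_eq_abs, mul_pow,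
    sq_abs]
  linear_combination (L / 2) * hZ2_le

end InnerProductSpace

theorem stmt_7_general (d N : ℕ) (hN : 1 ≤ N)
    {Ω : Type*} [MeasurableSpace Ω] (μ : Measure Ω) [IsProbabilityMeasure μ]
    (L σ η : ℝ) (hL : 0 < L)
    (f : Fin N → EuclideanSpace ℝ (Fin d) → ℝ)
    (hdiff : ∀ i, Differentiable ℝ (f i))
    (hLip : ∀ i x y, ‖gradient (f i) y - gradient (f i) x‖ ≤ L * ‖y - x‖)
    (F : EuclideanSpace ℝ (Fin d) → ℝ)
    (hF : F = fun z => (1 / (N : ℝ)) * ∑ i, f i z)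
    (x : Fin N → EuclideanSpace ℝ (Fin d))
    (xbar : EuclideanSpace ℝ (Fin d))
    (G : Fin N → Ω → EuclideanSpace ℝ (Fin d))
    (hGint : ∀ i, Integrable (G i) μ)
    (hindep : ProbabilityTheory.iIndepFun G μ)
    (hmean : ∀ i, ∫ ω, G i ω ∂μ = gradient (f i) (x i))
    (hvarint : ∀ i, Integrable (fun ω => ‖G i ω - gradient (f i) (x i)‖ ^ 2) μ)
    (hvar : ∀ i, ∫ ω, ‖G i ω - gradient (f i) (x i)‖ ^ 2 ∂μ ≤ σ ^ 2)
    (τ : ℕ) (hη : 0 < η)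
    (xplus : Ω → EuclideanSpace ℝ (Fin d))
    (hxplus : ∀ ω, xplus ω = xbar - ((η * τ) / (N : ℝ)) • ∑ i, G i ω) :
    ∫ ω, F (xplus ω) ∂μ ≤
      F xbar + η * τ * (L * η * τ - 1 / 2) * ‖gradient F xbar‖ ^ 2
        + (η * L ^ 2 * τ / (N : ℝ)) * (1 / 2 + η * L * τ) * ∑ i, ‖xbar - x i‖ ^ 2
        + σ ^ 2 * η ^ 2 * τ ^ 2 * L / (N : ℝ) := by
  have : Nonempty (Fin N) := ⟨⟨0, hN⟩⟩
  have hgradF : ∀ z, gradient F z = (1 / (N : ℝ)) • ∑ i, gradient (f i) z := fun z => by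
    subst hF
    exact gradient_const_mul_sum hdiff _ z
  have hFdiff : Differentiable ℝ F := by
    subst hF
    exact (Differentiable.fun_sum fun i _ => hdiff i).const_mul _
  have hFLip : ∀ p q, ‖gradient F q - gradient F p‖ ≤ L * ‖q - p‖ := fun p q => by
    simpa [hgradF] using norm_average_sub_average_le (u := fun i => gradient (f i)) hLip p q
  have hstep := integral_comp_sub_smul_sum_le_of_iIndepFun (t := η * τ) hL.le hFdiff hFLip
    hGint hindep hmean hvarint hvar xbar
  have hbias := norm_average_sub_average_sq_le (u := fun i => gradient (f i)) hLip x xbar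
  simp only [Fintype.card_fin, ← hgradF] at hstep hbias
  have halg := neg_mul_inner_add_le (gradient F xbar)
    ((1 / (N : ℝ)) • ∑ i, gradient (f i) (x i) - gradient F xbar) (t := η * τ) (by positivity)
    hL.le
  rw [add_sub_cancel] at halg
  simp_rw [hxplus]
  have hnoise : 0 ≤ L * (η * τ) ^ 2 * σ ^ 2 / N := by positivity
  linear_combination hstep + halg + (η * τ * (1 / 2 + L * (η * τ))) * hbias + hnoise / 2

/-- **Intermediate descent inequality (Eq. proof-1-4)**. -/
theorem stmt_7 (d N : ℕ) (hN : 1 ≤ N)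
    {Ω : Type*} [MeasurableSpace Ω] (μ : Measure Ω) [IsProbabilityMeasure μ]
    (L σ η : ℝ) (hL : 0 < L) (hσ : 0 ≤ σ)
    (f : Fin N → EuclideanSpace ℝ (Fin d) → ℝ)
    (hdiff : ∀ i, Differentiable ℝ (f i))
    (hLip : ∀ i x y, ‖gradient (f i) y - gradient (f i) x‖ ≤ L * ‖y - x‖)
    (F : EuclideanSpace ℝ (Fin d) → ℝ)
    (hF : F = fun z => (1 / (N : ℝ)) * ∑ i, f i z)
    (x : Fin N → EuclideanSpace ℝ (Fin d))
    (xbar : EuclideanSpace ℝ (Fin d))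
    (hxbar : xbar = (1 / (N : ℝ)) • ∑ i, x i)
    (G : Fin N → Ω → EuclideanSpace ℝ (Fin d))
    (hGint : ∀ i, Integrable (G i) μ)
    (hindep : ProbabilityTheory.iIndepFun G μ)
    (hmean : ∀ i, ∫ ω, G i ω ∂μ = gradient (f i) (x i))
    (hvarint : ∀ i, Integrable (fun ω => ‖G i ω - gradient (f i) (x i)‖ ^ 2) μ)
    (hvar : ∀ i, ∫ ω, ‖G i ω - gradient (f i) (x i)‖ ^ 2 ∂μ ≤ σ ^ 2)
    (τ : ℕ) (hτ : 1 ≤ τ) (hη : 0 < η)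
    (xplus : Ω → EuclideanSpace ℝ (Fin d))
    (hxplus : ∀ ω, xplus ω = xbar - ((η * τ) / (N : ℝ)) • ∑ i, G i ω) :
    ∫ ω, F (xplus ω) ∂μ ≤
      F xbar + η * τ * (L * η * τ - 1 / 2) * ‖gradient F xbar‖ ^ 2
        + (η * L ^ 2 * τ / (N : ℝ)) * (1 / 2 + η * L * τ) * ∑ i, ‖xbar - x i‖ ^ 2
        + σ ^ 2 * η ^ 2 * τ ^ 2 * L / (N : ℝ) :=
  stmt_7_general d N hN μ L σ η hL f hdiff hLip F hF x xbar G hGint hindep hmean hvarint hvar τ hη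
    xplus hxplus
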